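/- Let 𝓜₁ be the linear operator on H_N defined on the basis (ψ^N_n) by 𝓜₁ψ^N_n := ψ^N_{n+1} + ψ^N_{n−1} (with the conventions ψ^N_{−1} := 0 and ψ^N_N := 0), i.e. the operator whose matrix in the basis (ψ^N_n) is the tridiagonal 0–1 matrix M₁. Then for every z ∈ ℂ∖{0}: 𝓜₁ψ^a_z = Σ_{n=0}^{N−1} [ conj(z)^(−1)·μ(n)·√(C^N_n/C^N_{n−1})·ã(τ(z)/ℏ − (n−1)) + conj(z)·ν(n)·√(C^N_n/C^N_{n+1})·ã(τ(z)/ℏ − (n+1)) ] · conj(φ_n(z)) · φ_n, where the term containing μ(n) is omitted for n = 0 and the term containing ν(n) is omitted for n = N−1. (This expresses 𝓜₁ψ^a_z = ψ^{Σ₁(z)a}_z.) -/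

import Mathlib

open MeasureTheory Complex Real

noncomputable section

/-- The measure `dμ_N(z) = (1/π)·(1+|z|²)^{-(N+1)} dA(z)` on `ℂ`. -/
def muN (N : ℕ) : Measure ℂ :=
  volume.withDensity (fun z => ENNReal.ofReal (1 / (Real.pi * (1 + ‖z‖ ^ 2) ^ (N + 1))))

/-- The basis vectors `φ_n(z) = √(N!/(n!(N−1−n)!))·zⁿ`. -/
def phiN (N n : ℕ) : ℂ → ℂ :=
  fun z => (Real.sqrt ((N.factorial : ℝ) / (n.factorial * (N - 1 - n).factorial)) : ℂ) * z ^ n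

/-- The coherent state `ρ_{z₀}(z) = N·(1+conj(z₀)·z)^{N−1}`. -/
def rhoN (N : ℕ) (z₀ : ℂ) : ℂ → ℂ :=
  fun z => (N : ℂ) * (1 + (starRingEnd ℂ) z₀ * z) ^ (N - 1)

/-- The inner product `⟨P,Q⟩ = ∫ P(z) conj(Q(z)) dμ_N(z)`, linear in the first argument. -/
def hermN (N : ℕ) (P Q : ℂ → ℂ) : ℂ :=
  ∫ z, P z * (starRingEnd ℂ) (Q z) ∂(muN N)

/-- The Fourier transform `ã(y) = (2π)^{-1/2} ∫ e^{ixy} a(x) dx`. -/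
def tildeF (a : ℝ → ℂ) (y : ℝ) : ℂ :=
  (Real.sqrt (2 * Real.pi))⁻¹ * ∫ x : ℝ, Complex.exp (Complex.I * x * y) * a x

/-- `τ(z) = |z|²/(1+|z|²)`. -/
def tauS (z : ℂ) : ℝ := ‖z‖ ^ 2 / (1 + ‖z‖ ^ 2)

/-- The building vector `ψ^a_z = ∫ a(t)·e^{iτ(z)t/ℏ}·ρ_{e^{it}z} dt/√(2π)`. -/
def psiA (N : ℕ) (ℏ : ℝ) (a : ℝ → ℂ) (z : ℂ) : ℂ → ℂ :=
  fun w => ∫ t : ℝ, a t * Complex.exp (Complex.I * (tauS z) * t / (ℏ : ℂ)) *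
    rhoN N (Complex.exp (Complex.I * t) * z) w / (Real.sqrt (2 * Real.pi) : ℂ)

/-- `C^N_n = N·binom(N−1,n)·∫₀¹ |ã((τ−nℏ)/ℏ)|²·(τ/(1−τ))ⁿ·(1−τ)^{N−1} dτ`. -/
def CNn (N : ℕ) (ℏ : ℝ) (a : ℝ → ℂ) (n : ℕ) : ℝ :=
  N * ((N - 1).choose n) *
    ∫ τ in (0:ℝ)..1, ‖tildeF a ((τ - n * ℏ) / ℏ)‖ ^ 2 * (τ / (1 - τ)) ^ n * (1 - τ) ^ (N - 1)

/-- The normalized vectors `ψ^N_n = √(C^N_n)·φ_n`. -/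
def psiNn (N : ℕ) (ℏ : ℝ) (a : ℝ → ℂ) (n : ℕ) : ℂ → ℂ :=
  fun z => (Real.sqrt (CNn N ℏ a n) : ℂ) * phiN N n z

/-! The coherent state is the reproducing kernel, `ρ_{z₀} = Σₙ conj(φₙ(z₀))·φₙ`, and rotating
`z₀` by `e^{it}` multiplies its `n`-th term by `e^{-int}`. Integrating against `a(t)·e^{iτt/ℏ}`
turns these phases into Fourier transforms: `ψ^a_z = Σₙ ã(τ(z)/ℏ − n)·conj(φₙ(z))·φₙ`. In the
basis `ψ^N_n = √(C^N_n)·φₙ` the operator `𝓜₁` moves the `n`-th coefficient to the indices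
`n ± 1`, and the ratios `φ_{n+1}(z) = ν(n)·z·φₙ(z)`, `φ_{n−1}(z) = μ(n)·z⁻¹·φₙ(z)` bring those
coefficients back to the form `(…)·conj(φₙ(z))`. -/

theorem phiN_apply_of_lt {N n : ℕ} (hn : n < N) (z : ℂ) :
    phiN N n z = (√((N : ℝ) * (N - 1).choose n) : ℂ) * z ^ n := by
  have hchoose := Nat.choose_mul_factorial_mul_factorial (show n ≤ N - 1 by omega)
  have hfact : N * (N - 1).factorial = N.factorial := Nat.mul_factorial_pred (by omega)
  have hpos : (0 : ℝ) < n.factorial * (N - 1 - n).factorial := by positivity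
  rw [phiN, ← hfact, ← hchoose]
  congr 3
  push_cast
  field_simp

theorem conj_phiN_mul_phiN {N n : ℕ} (hn : n < N) (z w : ℂ) :
    starRingEnd ℂ (phiN N n z) * phiN N n w
      = (N * (N - 1).choose n : ℂ) * (starRingEnd ℂ z * w) ^ n := by
  rw [phiN_apply_of_lt hn, phiN_apply_of_lt hn, map_mul, Complex.conj_ofReal, map_pow]
  have hsq : (√((N : ℝ) * (N - 1).choose n) : ℂ) * √((N : ℝ) * (N - 1).choose n)
      = N * (N - 1).choose n := by
    rw [← Complex.ofReal_mul, Real.mul_self_sqrt (by positivity)]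
    push_cast
    rfl
  linear_combination (starRingEnd ℂ z * w) ^ n * hsq

theorem phiN_succ {N n : ℕ} (hn : n + 1 < N) (z : ℂ) :
    phiN N (n + 1) z = z * √(((N : ℝ) - 1 - n) / (n + 1)) * phiN N n z := by
  have hcoeff : (N : ℝ) * (N - 1).choose (n + 1)
      = ((N - 1 - n) / (n + 1)) * (N * (N - 1).choose n) := by
    have h := Nat.choose_succ_right_eq (N - 1) n
    have hcast : ((N - 1 - n : ℕ) : ℝ) = N - 1 - n := by
      rw [Nat.cast_sub (by omega), Nat.cast_sub (by omega)]
      push_cast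
      ring
    have h' : ((N - 1).choose (n + 1) : ℝ) * (n + 1)
        = (N - 1).choose n * ((N - 1 - n : ℕ) : ℝ) := by
      exact_mod_cast h
    rw [← hcast]
    field_simp
    linear_combination (N : ℝ) * h'
  have hnn : (0 : ℝ) ≤ ((N : ℝ) - 1 - n) / (n + 1) := by
    have : ((n + 1 : ℕ) : ℝ) < N := by exact_mod_cast hn
    push_cast at this
    exact div_nonneg (by linarith) (by positivity)
  rw [phiN_apply_of_lt hn, phiN_apply_of_lt (by omega), hcoeff, Real.sqrt_mul hnn]
  push_cast
  ring

theorem phiN_pred {N n : ℕ} (h1 : 1 ≤ n) (hn : n < N) {z : ℂ} (hz : z ≠ 0) :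
    phiN N (n - 1) z = z⁻¹ * √((n : ℝ) / (N - n)) * phiN N n z := by
  obtain ⟨k, rfl⟩ : ∃ k, n = k + 1 := ⟨n - 1, by omega⟩
  have hpos : (0 : ℝ) < N - (k + 1) := by
    have : ((k + 1 : ℕ) : ℝ) < N := by exact_mod_cast hn
    push_cast at this
    linarith
  have hinv : √(((k + 1 : ℕ) : ℝ) / (N - (k + 1 : ℕ))) * √(((N : ℝ) - 1 - k) / (k + 1)) = 1 := by
    rw [← Real.sqrt_mul (by push_cast; positivity), Real.sqrt_eq_one]
    push_cast
    field_simp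
    ring
  rw [phiN_succ hn, Nat.add_sub_cancel]
  have hinvC := congrArg (fun r : ℝ => (r : ℂ)) hinv
  push_cast at hinvC ⊢
  field_simp
  linear_combination (-phiN N k z) * hinvC

theorem rhoN_eq_sum (N : ℕ) (z₀ w : ℂ) :
    rhoN N z₀ w = ∑ n ∈ Finset.range N, starRingEnd ℂ (phiN N n z₀) * phiN N n w := by
  rcases N with _ | K
  · simp [rhoN]
  rw [rhoN, add_comm (1 : ℂ), add_pow, Nat.add_sub_cancel, Finset.mul_sum]
  refine Finset.sum_congr rfl fun n hn => ?_
  rw [conj_phiN_mul_phiN (Finset.mem_range.mp hn)]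
  push_cast
  ring

theorem conj_phiN_exp_mul (N n : ℕ) (t : ℝ) (z : ℂ) :
    starRingEnd ℂ (phiN N n (Complex.exp (Complex.I * t) * z))
      = Complex.exp (-(Complex.I * n * t)) * starRingEnd ℂ (phiN N n z) := by
  have hconj : starRingEnd ℂ (Complex.exp (Complex.I * t)) = Complex.exp (-(Complex.I * t)) := by
    rw [← Complex.exp_conj, map_mul, Complex.conj_I, Complex.conj_ofReal, neg_mul]
  simp only [phiN, map_mul, map_pow, hconj]
  rw [mul_pow, ← Complex.exp_nat_mul,
    show (n : ℂ) * -(Complex.I * t) = -(Complex.I * n * t) by ring]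
  ring

theorem integrable_exp_I_mul_mul {a : ℝ → ℂ} (ha : Integrable a) (y : ℝ) :
    Integrable fun x : ℝ => Complex.exp (Complex.I * x * y) * a x :=
  ha.bdd_mul (c := 1) (by fun_prop) (Filter.Eventually.of_forall fun x => by
    rw [Complex.norm_exp]
    simp)

theorem psiA_apply_eq_sum (N : ℕ) (ℏ : ℝ) {a : ℝ → ℂ} (ha : Integrable a) (z w : ℂ) :
    psiA N ℏ a z w = ∑ n ∈ Finset.range N,
      tildeF a (tauS z / ℏ - n) * starRingEnd ℂ (phiN N n z) * phiN N n w := by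
  have hintegrand : ∀ t : ℝ,
      a t * Complex.exp (Complex.I * tauS z * t / ℏ) * rhoN N (Complex.exp (Complex.I * t) * z) w
          / (√(2 * π) : ℂ)
        = ∑ n ∈ Finset.range N, (starRingEnd ℂ (phiN N n z) * phiN N n w / (√(2 * π) : ℂ))
            * (Complex.exp (Complex.I * t * ((tauS z / ℏ - n : ℝ) : ℂ)) * a t) := by
    intro t
    simp only [rhoN_eq_sum, conj_phiN_exp_mul, Finset.mul_sum, Finset.sum_div]
    refine Finset.sum_congr rfl fun n _ => ?_
    have hphase : Complex.I * t * ((tauS z / ℏ - n : ℝ) : ℂ)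
        = Complex.I * tauS z * t / ℏ + -(Complex.I * n * t) := by
      push_cast
      ring
    rw [hphase, Complex.exp_add]
    ring
  simp only [psiA, hintegrand]
  rw [integral_finsetSum _ fun n _ => (integrable_exp_I_mul_mul ha _).const_mul _]
  refine Finset.sum_congr rfl fun n _ => ?_
  rw [integral_const_mul, tildeF, Complex.ofReal_inv]
  ring

theorem psiNn_eq_smul (N : ℕ) (ℏ : ℝ) (a : ℝ → ℂ) (n : ℕ) :
    psiNn N ℏ a n = (√(CNn N ℏ a n) : ℂ) • phiN N n :=
  rfl

theorem psiA_eq_sum_smul_psiNn {N : ℕ} (ℏ : ℝ) {a : ℝ → ℂ} (ha : Integrable a)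
    (hC : ∀ n < N, 0 < CNn N ℏ a n) (z : ℂ) :
    psiA N ℏ a z = ∑ n ∈ Finset.range N,
      (tildeF a (tauS z / ℏ - n) * starRingEnd ℂ (phiN N n z) / √(CNn N ℏ a n))
        • psiNn N ℏ a n := by
  funext w
  rw [psiA_apply_eq_sum N ℏ ha, Finset.sum_apply]
  refine Finset.sum_congr rfl fun n hn => ?_
  have hsqrt : (√(CNn N ℏ a n) : ℂ) ≠ 0 :=
    Complex.ofReal_ne_zero.mpr (Real.sqrt_pos.mpr (hC n (Finset.mem_range.mp hn))).ne'
  rw [psiNn_eq_smul, smul_smul, Pi.smul_apply, smul_eq_mul, div_mul_cancel₀ _ hsqrt]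

theorem Finset.sum_range_adjacent_transpose {M : Type*} [AddCommMonoid M] (N : ℕ) (F : ℕ → ℕ → M) :
    ∑ n ∈ Finset.range N,
        ((if n + 1 ≤ N - 1 then F n (n + 1) else 0) + (if 1 ≤ n then F n (n - 1) else 0))
      = ∑ m ∈ Finset.range N,
          ((if 1 ≤ m then F (m - 1) m else 0) + (if m + 1 ≤ N - 1 then F (m + 1) m else 0)) := by
  rcases N with _ | K
  · simp
  rw [Finset.sum_add_distrib, Finset.sum_add_distrib]
  congr 1
  · rw [Finset.sum_range_succ, Finset.sum_range_succ']
    simp only [Nat.add_sub_cancel, add_le_iff_nonpos_right, nonpos_iff_eq_zero, one_ne_zero,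
      if_false, add_zero, Nat.le_add_left, if_true]
    refine Finset.sum_congr rfl fun n hn => ?_
    rw [if_pos (by simp at hn; omega)]
  · rw [Finset.sum_range_succ', Finset.sum_range_succ]
    simp only [Nat.add_sub_cancel, nonpos_iff_eq_zero, one_ne_zero,
      if_false, add_zero, Nat.le_add_left, if_true, Nat.not_succ_le_self]
    refine Finset.sum_congr rfl fun n hn => ?_
    rw [if_pos (by simp at hn; omega)]

theorem psiA_coeff_pred_mul_psiNn {N : ℕ} {ℏ : ℝ} {a : ℝ → ℂ} {m : ℕ} (h1 : 1 ≤ m) (hm : m < N)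
    (hC : 0 ≤ CNn N ℏ a m) {z : ℂ} (hz : z ≠ 0) (w : ℂ) :
    tildeF a (tauS z / ℏ - ((m - 1 : ℕ) : ℝ)) * starRingEnd ℂ (phiN N (m - 1) z)
          / √(CNn N ℏ a (m - 1))
        * psiNn N ℏ a m w
      = (starRingEnd ℂ z)⁻¹ * (√((m : ℝ) / (N - m)) : ℂ) * (√(CNn N ℏ a m / CNn N ℏ a (m - 1)) : ℂ)
          * tildeF a (tauS z / ℏ - ((m : ℝ) - 1)) * starRingEnd ℂ (phiN N m z) * phiN N m w := by
  rw [phiN_pred h1 hm hz, Nat.cast_sub h1, Real.sqrt_div hC, psiNn]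
  simp only [map_mul, map_inv₀, Complex.conj_ofReal]
  push_cast
  ring

theorem psiA_coeff_succ_mul_psiNn {N : ℕ} {ℏ : ℝ} {a : ℝ → ℂ} {m : ℕ} (hm : m + 1 < N)
    (hC : 0 ≤ CNn N ℏ a m) (z w : ℂ) :
    tildeF a (tauS z / ℏ - ((m + 1 : ℕ) : ℝ)) * starRingEnd ℂ (phiN N (m + 1) z)
          / √(CNn N ℏ a (m + 1))
        * psiNn N ℏ a m w
      = starRingEnd ℂ z * (√(((N : ℝ) - 1 - m) / (m + 1)) : ℂ)
          * (√(CNn N ℏ a m / CNn N ℏ a (m + 1)) : ℂ)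
          * tildeF a (tauS z / ℏ - ((m : ℝ) + 1)) * starRingEnd ℂ (phiN N m z) * phiN N m w := by
  rw [phiN_succ hm, Real.sqrt_div hC, psiNn]
  simp only [map_mul, Complex.conj_ofReal]
  push_cast
  ring

theorem stmt7_general (N : ℕ) (ℏ : ℝ) (a : SchwartzMap ℝ ℂ)
    (hC : ∀ n : ℕ, n ≤ N - 1 → 0 < CNn N ℏ (⇑a) n)
    (M1 : (ℂ → ℂ) →ₗ[ℂ] (ℂ → ℂ))
    (hM1 : ∀ n : ℕ, n ≤ N - 1 →
      M1 (psiNn N ℏ (⇑a) n)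
        = (if n + 1 ≤ N - 1 then psiNn N ℏ (⇑a) (n + 1) else 0)
          + (if 1 ≤ n then psiNn N ℏ (⇑a) (n - 1) else 0))
    (z : ℂ) (hz : z ≠ 0) :
    M1 (psiA N ℏ (⇑a) z) = fun w => ∑ n ∈ Finset.range N,
      ((if 1 ≤ n then
          ((starRingEnd ℂ) z)⁻¹ * (Real.sqrt ((n : ℝ) / ((N : ℝ) - n)) : ℂ)
            * (Real.sqrt (CNn N ℏ (⇑a) n / CNn N ℏ (⇑a) (n - 1)) : ℂ)
            * tildeF (⇑a) (tauS z / ℏ - ((n : ℝ) - 1))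
        else 0)
       + (if n + 1 ≤ N - 1 then
          (starRingEnd ℂ) z * (Real.sqrt (((N : ℝ) - 1 - n) / ((n : ℝ) + 1)) : ℂ)
            * (Real.sqrt (CNn N ℏ (⇑a) n / CNn N ℏ (⇑a) (n + 1)) : ℂ)
            * tildeF (⇑a) (tauS z / ℏ - ((n : ℝ) + 1))
        else 0))
      * (starRingEnd ℂ) (phiN N n z) * phiN N n w := by
  have hC' : ∀ n < N, 0 < CNn N ℏ a n := fun n hn => hC n (by omega)
  set c : ℕ → ℂ := fun n => tildeF a (tauS z / ℏ - n) * starRingEnd ℂ (phiN N n z) / √(CNn N ℏ a n)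
  have hM1c : ∀ n ∈ Finset.range N, M1 (c n • psiNn N ℏ a n)
      = (if n + 1 ≤ N - 1 then c n • psiNn N ℏ a (n + 1) else 0)
        + (if 1 ≤ n then c n • psiNn N ℏ a (n - 1) else 0) := fun n hn => by
    rw [map_smul, hM1 n (by simp at hn; omega), smul_add, smul_ite, smul_ite, smul_zero]
  rw [psiA_eq_sum_smul_psiNn ℏ a.integrable hC', map_sum, Finset.sum_congr rfl hM1c,
    Finset.sum_range_adjacent_transpose N fun n k => c n • psiNn N ℏ a k]
  funext w
  rw [Finset.sum_apply]
  refine Finset.sum_congr rfl fun m hm => ?_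
  have hCm := (hC' m (Finset.mem_range.mp hm)).le
  simp only [Pi.add_apply, ite_apply, Pi.zero_apply, Pi.smul_apply, smul_eq_mul, add_mul]
  congr 1 <;> split_ifs with h
  · exact psiA_coeff_pred_mul_psiNn h (Finset.mem_range.mp hm) hCm hz w
  · simp
  · exact psiA_coeff_succ_mul_psiNn (by omega) hCm z w
  · simp

/-- for the operator `𝓜₁` with `𝓜₁ψ^N_n = ψ^N_{n+1} + ψ^N_{n−1}`
(conventions `ψ^N_{−1} = ψ^N_N = 0`), one has, for `z ≠ 0`,
`𝓜₁ψ^a_z = Σ_n [conj(z)⁻¹·μ(n)·√(C^N_n/C^N_{n−1})·ã(τ(z)/ℏ−(n−1))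
            + conj(z)·ν(n)·√(C^N_n/C^N_{n+1})·ã(τ(z)/ℏ−(n+1))]·conj(φ_n(z))·φ_n`,
the `μ`-term being omitted for `n = 0` and the `ν`-term for `n = N−1`. -/
theorem stmt7 (N : ℕ) (hN : 1 ≤ N) (ℏ : ℝ) (hℏ : 0 < ℏ) (a : SchwartzMap ℝ ℂ)
    (hC : ∀ n : ℕ, n ≤ N - 1 → 0 < CNn N ℏ (⇑a) n)
    (M1 : (ℂ → ℂ) →ₗ[ℂ] (ℂ → ℂ))
    (hM1 : ∀ n : ℕ, n ≤ N - 1 →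
      M1 (psiNn N ℏ (⇑a) n)
        = (if n + 1 ≤ N - 1 then psiNn N ℏ (⇑a) (n + 1) else 0)
          + (if 1 ≤ n then psiNn N ℏ (⇑a) (n - 1) else 0))
    (z : ℂ) (hz : z ≠ 0) :
    M1 (psiA N ℏ (⇑a) z) = fun w => ∑ n ∈ Finset.range N,
      ((if 1 ≤ n then
          ((starRingEnd ℂ) z)⁻¹ * (Real.sqrt ((n : ℝ) / ((N : ℝ) - n)) : ℂ)
            * (Real.sqrt (CNn N ℏ (⇑a) n / CNn N ℏ (⇑a) (n - 1)) : ℂ)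
            * tildeF (⇑a) (tauS z / ℏ - ((n : ℝ) - 1))
        else 0)
       + (if n + 1 ≤ N - 1 then
          (starRingEnd ℂ) z * (Real.sqrt (((N : ℝ) - 1 - n) / ((n : ℝ) + 1)) : ℂ)
            * (Real.sqrt (CNn N ℏ (⇑a) n / CNn N ℏ (⇑a) (n + 1)) : ℂ)
            * tildeF (⇑a) (tauS z / ℏ - ((n : ℝ) + 1))
        else 0))
      * (starRingEnd ℂ) (phiN N n z) * phiN N n w :=
  stmt7_general N ℏ a hC M1 hM1 z hz
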